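/- Let R be a principal ideal domain, (M, λ) a non-degenerate symmetric bilinear form on a finitely generated free R-module, and (v₁,...,v_k) an isotropic unimodular sequence in M. Then there exists a witnessing sequence: vectors w₁,...,w_k ∈ M with λ(vᵢ, wⱼ) = δᵢⱼ and λ(wᵢ, wⱼ) = 0 for i ≠ j. -/

import Mathlib

/-!
The coordinate functionals of the basis `v` of the direct summand `span v`, extended by zero on
a complement, are represented (by non-degeneracy) by vectors `u j` with `B (v i) (u j) = δᵢⱼ`.
Put `c l j = B (u l) (u j)` for `l < j` and `c l j = 0` otherwise. Since the `v i` are isotropic,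
`w j = u j - ∑ l, c l j • v l` keeps these pairings, and by symmetry
`B (w i) (w j) = B (u i) (u j) - c i j - c j i`, which vanishes for `i ≠ j`.
-/

/-- An isotropic unimodular sequence: the `v i` form a basis of a free direct summand
of `M` and are pairwise (and self) orthogonal for `B`. -/
def IsoUnimodSeq (R : Type*) [CommRing R] {M : Type*} [AddCommGroup M] [Module R M]
    (B : LinearMap.BilinForm R M) {k : ℕ} (v : Fin k → M) : Prop :=
  LinearIndependent R v ∧
  (∃ q : Submodule R M, IsCompl (Submodule.span R (Set.range v)) q) ∧
  ∀ i j, B (v i) (v j) = 0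

theorem LinearIndependent.exists_dual_of_isCompl {R M ι : Type*} [Ring R] [AddCommGroup M]
    [Module R M] [DecidableEq ι] {v : ι → M} (hli : LinearIndependent R v)
    {q : Submodule R M} (hq : IsCompl (Submodule.span R (Set.range v)) q) :
    ∃ φ : ι → M →ₗ[R] R, ∀ i j, φ j (v i) = if i = j then 1 else 0 := by
  let b := Module.Basis.span hli
  refine ⟨fun j => (b.coord j) ∘ₗ Submodule.projectionOnto _ q hq, fun i j => ?_⟩
  have hv_mem : v i ∈ Submodule.span R (Set.range v) := Submodule.subset_span ⟨i, rfl⟩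
  rw [LinearMap.comp_apply, Submodule.projectionOnto_apply_of_mem_left hq hv_mem,
    ← Module.Basis.span_apply hli, Module.Basis.coord_apply, Module.Basis.repr_self,
    Finsupp.single_apply]

theorem LinearMap.BilinForm.exists_orthogonal_dual_of_isotropic {R M ι : Type*} [CommRing R]
    [AddCommGroup M] [Module R M] [Fintype ι] [LinearOrder ι] {B : LinearMap.BilinForm R M}
    (hB : B.IsSymm) {v u : ι → M} (hv : ∀ i j, B (v i) (v j) = 0)
    (hvu : ∀ i j, B (v i) (u j) = if i = j then 1 else 0) :
    ∃ w : ι → M, (∀ i j, B (v i) (w j) = if i = j then 1 else 0) ∧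
      ∀ i j, i ≠ j → B (w i) (w j) = 0 := by
  let c : ι → ι → R := fun l j => if l < j then B (u l) (u j) else 0
  let w : ι → M := fun j => u j - ∑ l, c l j • v l
  have hvw : ∀ i j, B (v i) (w j) = if i = j then 1 else 0 := by
    intro i j
    simp [w, hv, hvu i j]
  have huw : ∀ i j, B (u i) (w j) = B (u i) (u j) - c i j := by
    intro i j
    simp [w, ← hB.eq _ (u i), hvu, mul_comm]
  have hww : ∀ i j, B (w i) (w j) = B (u i) (u j) - c i j - c j i := by
    intro i j
    simp [w, huw, hvw]
  refine ⟨w, hvw, fun i j hij => ?_⟩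
  rw [hww]
  rcases hij.lt_or_gt with h | h
  · simp [c, h, h.not_gt]
  · simp [c, h, h.not_gt, hB.eq (u j)]

theorem stmt_18_general (R : Type*) [CommRing R]
    (M : Type*) [AddCommGroup M] [Module R M]
    (B : LinearMap.BilinForm R M) (hsymm : B.IsSymm)
    (hnd : Function.Bijective fun v : M => B v)
    (k : ℕ) (v : Fin k → M) (hv : IsoUnimodSeq R B v) :
    ∃ w : Fin k → M,
      (∀ i j, B (v i) (w j) = if i = j then 1 else 0) ∧
      ∀ i j, i ≠ j → B (w i) (w j) = 0 := by
  obtain ⟨hli, ⟨q, hq⟩, hiso⟩ := hv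
  obtain ⟨φ, hφ⟩ := hli.exists_dual_of_isCompl hq
  choose u hu using fun j => hnd.2 (φ j)
  refine LinearMap.BilinForm.exists_orthogonal_dual_of_isotropic (u := u) hsymm hiso fun i j => ?_
  rw [hsymm.eq, ← hφ]
  exact DFunLike.congr_fun (hu j) (v i)

/-- Every isotropic unimodular sequence for a non-degenerate symmetric
form over a PID admits a witnessing sequence: `w₁,...,w_k` with `B vᵢ wⱼ = δᵢⱼ` and
`B wᵢ wⱼ = 0` for `i ≠ j`. -/
theorem stmt_18 (R : Type*) [CommRing R] [IsDomain R] [IsPrincipalIdealRing R]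
    (M : Type*) [AddCommGroup M] [Module R M] [Module.Free R M] [Module.Finite R M]
    (B : LinearMap.BilinForm R M) (hsymm : B.IsSymm)
    (hnd : Function.Bijective fun v : M => B v)
    (k : ℕ) (v : Fin k → M) (hv : IsoUnimodSeq R B v) :
    ∃ w : Fin k → M,
      (∀ i j, B (v i) (w j) = if i = j then 1 else 0) ∧
      ∀ i j, i ≠ j → B (w i) (w j) = 0 :=
  stmt_18_general R M B hsymm hnd k v hv
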